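/- Let (Ω₁, μ₁), (Ω₂, μ₂), (Ω₃, μ₃) be measure spaces. Let (f_j), (h_k') be sequences of bounded measurable functions on Ω₁ and Ω₃ respectively, and (f_j'), (h_k) sequences in L²(μ₂), with Σ_j ‖f_j‖_∞‖f_j'‖₂ < ∞ and Σ_k ‖h_k‖₂‖h_k'‖_∞ < ∞. Define K₁(x,y) = Σ_j f_j(x)f_j'(y) and K₂(y,z) = Σ_k h_k(y)h_k'(z) (the series converging absolutely pointwise). Then for all x ∈ Ω₁, z ∈ Ω₃ the function y ↦ K₁(x,y)·K₂(y,z) is integrable on Ω₂, and ∫_{Ω₂} K₁(x,y) K₂(y,z) dμ₂(y) = Σ_{j,k} (∫ f_j' h_k dμ₂) · f_j(x) h_k'(z), with Σ_{j,k} |∫ f_j' h_k dμ₂|·‖f_j‖_∞·‖h_k'‖_∞ < ∞. -/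

import Mathlib

/-!
Fix `x` and `z`. The series `∑ j, f j x • f' j` and `∑ k, h' k z • h k` have summable `L²` norms,
so they converge in `L²` and, almost everywhere, absolutely; hence their product is integrable
and a.e. equal to the double series over pairs `(j, k)`. By Cauchy–Schwarz the `L¹` norm of the
`(j, k)` term is at most `Mf j ‖f' j‖₂ ‖h k‖₂ Mh' k`, a summable family, so the integral can be
exchanged with the double sum.
-/

open MeasureTheory
open scoped ENNReal

namespace MeasureTheory

variable {Ω ι κ E 𝕜 : Type*} [MeasurableSpace Ω] {μ : Measure Ω}

section Series

variable [NormedAddCommGroup E] {p : ℝ≥0∞}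

theorem tsum_eLpNorm_const_mul_ne_top [NormedRing 𝕜] {c : ι → 𝕜} {M : ι → ℝ} {g : ι → Ω → 𝕜}
    (hc : ∀ j, ‖c j‖ ≤ M j) (hg : ∀ j, MemLp (g j) p μ)
    (hs : Summable fun j => M j * (eLpNorm (g j) p μ).toReal) :
    ∑' j, eLpNorm (fun y => c j * g j y) p μ ≠ ∞ := by
  have hM : ∀ j, 0 ≤ M j * (eLpNorm (g j) p μ).toReal := fun j =>
    mul_nonneg ((norm_nonneg _).trans (hc j)) ENNReal.toReal_nonneg
  refine ne_top_of_le_ne_top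
    (ENNReal.ofReal_ne_top (r := ∑' j, M j * (eLpNorm (g j) p μ).toReal)) ?_
  rw [ENNReal.ofReal_tsum_of_nonneg hM hs]
  refine ENNReal.tsum_le_tsum fun j => ?_
  calc eLpNorm (fun y => c j * g j y) p μ ≤ ‖c j‖ₑ * eLpNorm (g j) p μ :=
        eLpNorm_const_smul_le (c := c j) (f := g j)
    _ = ENNReal.ofReal (‖c j‖ * (eLpNorm (g j) p μ).toReal) := by
        rw [ENNReal.ofReal_mul (norm_nonneg _), ofReal_norm,
          ENNReal.ofReal_toReal (hg j).eLpNorm_ne_top]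
    _ ≤ ENNReal.ofReal (M j * (eLpNorm (g j) p μ).toReal) := by
        gcongr
        exact hc j

theorem memLp_tsum_of_tsum_eLpNorm_ne_top [Countable ι] [CompleteSpace E] [Fact (1 ≤ p)]
    {u : ι → Ω → E} (hu : ∀ j, MemLp (u j) p μ) (hs : ∑' j, eLpNorm (u j) p μ ≠ ∞) :
    MemLp (fun y => ∑' j, u j y) p μ := by
  have hsum := Lp.coeFn_tsum (f := fun j => (hu j).toLp (u j))
    (by simpa only [Lp.enorm_toLp] using hs)
  refine (Lp.memLp _).ae_eq (hsum.trans ?_)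
  filter_upwards [ae_all_iff.2 fun j => (hu j).coeFn_toLp] with y hy
  exact tsum_congr hy

end Series

section Product

variable [RCLike 𝕜]

theorem integral_norm_mul_le_eLpNorm_two_mul_eLpNorm_two {u v : Ω → 𝕜} (hu : MemLp u 2 μ)
    (hv : MemLp v 2 μ) :
    ∫ y, ‖u y * v y‖ ∂μ ≤ (eLpNorm u 2 μ).toReal * (eLpNorm v 2 μ).toReal := by
  have hCS : eLpNorm (fun y => u y * v y) 1 μ ≤ eLpNorm u 2 μ * eLpNorm v 2 μ :=
    (eLpNorm_smul_le_mul_eLpNorm (p := 2) (q := 2) (r := 1) hv.1 hu.1 :)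
  rw [integral_norm_eq_lintegral_enorm (f := fun y => u y * v y) (hu.1.mul hv.1),
    ← eLpNorm_one_eq_lintegral_enorm, ← ENNReal.toReal_mul]
  exact ENNReal.toReal_mono (ENNReal.mul_ne_top hu.eLpNorm_ne_top hv.eLpNorm_ne_top) hCS

variable [Countable ι] [Countable κ] {u : ι → Ω → 𝕜} {v : κ → Ω → 𝕜}

theorem integrable_tsum_mul_tsum (hu : ∀ j, MemLp (u j) 2 μ) (hv : ∀ k, MemLp (v k) 2 μ)
    (hsu : ∑' j, eLpNorm (u j) 2 μ ≠ ∞) (hsv : ∑' k, eLpNorm (v k) 2 μ ≠ ∞) :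
    Integrable (fun y => (∑' j, u j y) * ∑' k, v k y) μ :=
  (memLp_tsum_of_tsum_eLpNorm_ne_top hu hsu).integrable_mul
    (memLp_tsum_of_tsum_eLpNorm_ne_top hv hsv)

theorem integral_tsum_mul_tsum (hu : ∀ j, MemLp (u j) 2 μ) (hv : ∀ k, MemLp (v k) 2 μ)
    (hsu : ∑' j, eLpNorm (u j) 2 μ ≠ ∞) (hsv : ∑' k, eLpNorm (v k) 2 μ ≠ ∞) :
    ∫ y, (∑' j, u j y) * (∑' k, v k y) ∂μ = ∑' q : ι × κ, ∫ y, u q.1 y * v q.2 y ∂μ := by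
  have hae : (fun y => (∑' j, u j y) * ∑' k, v k y) =ᵐ[μ]
      fun y => ∑' q : ι × κ, u q.1 y * v q.2 y := by
    filter_upwards [summable_norm_of_tsum_eLpNorm_ne_top one_le_two (fun j => (hu j).1) hsu,
      summable_norm_of_tsum_eLpNorm_ne_top one_le_two (fun k => (hv k).1) hsv] with y hu' hv'
    exact tsum_mul_tsum_of_summable_norm hu' hv'
  have hbound : Summable fun q : ι × κ =>
      (eLpNorm (u q.1) 2 μ).toReal * (eLpNorm (v q.2) 2 μ).toReal :=
    (ENNReal.summable_toReal hsu).mul_of_nonneg (ENNReal.summable_toReal hsv)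
      (fun _ => ENNReal.toReal_nonneg) fun _ => ENNReal.toReal_nonneg
  rw [integral_congr_ae hae, integral_tsum_of_summable_integral_norm]
  · exact fun q => (hu q.1).integrable_mul (hv q.2)
  · exact hbound.of_nonneg_of_le (fun _ => integral_nonneg fun _ => norm_nonneg _)
      fun q => integral_norm_mul_le_eLpNorm_two_mul_eLpNorm_two (hu q.1) (hv q.2)

end Product

end MeasureTheory

theorem kernel_composition_integral_general
    {Ω₁ Ω₂ Ω₃ : Type _} [MeasurableSpace Ω₂]
    (μ₂ : Measure Ω₂)
    (f : ℕ → Ω₁ → ℂ) (f' : ℕ → Ω₂ → ℂ) (h : ℕ → Ω₂ → ℂ) (h' : ℕ → Ω₃ → ℂ)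
    (Mf Mh' : ℕ → ℝ)
    (hMf : ∀ j x, ‖f j x‖ ≤ Mf j) (hMh' : ∀ k z, ‖h' k z‖ ≤ Mh' k)
    (hf' : ∀ j, MemLp (f' j) 2 μ₂) (hh : ∀ k, MemLp (h k) 2 μ₂)
    (hs1 : Summable fun j => Mf j * (eLpNorm (f' j) 2 μ₂).toReal)
    (hs2 : Summable fun k => (eLpNorm (h k) 2 μ₂).toReal * Mh' k) :
    (∀ (x : Ω₁) (z : Ω₃),
      Integrable (fun y => (∑' j, f j x * f' j y) * (∑' k, h k y * h' k z)) μ₂) ∧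
    (∀ (x : Ω₁) (z : Ω₃),
      ∫ y, (∑' j, f j x * f' j y) * (∑' k, h k y * h' k z) ∂μ₂
        = ∑' p : ℕ × ℕ, (∫ y, f' p.1 y * h p.2 y ∂μ₂) * (f p.1 x * h' p.2 z)) ∧
    Summable (fun p : ℕ × ℕ =>
      ‖∫ y, f' p.1 y * h p.2 y ∂μ₂‖ * Mf p.1 * Mh' p.2) := by
  have hu : ∀ x, ∑' j, eLpNorm (fun y => f j x * f' j y) 2 μ₂ ≠ ∞ := fun x =>
    tsum_eLpNorm_const_mul_ne_top (fun j => hMf j x) hf' hs1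
  have hv : ∀ z, ∑' k, eLpNorm (fun y => h k y * h' k z) 2 μ₂ ≠ ∞ := fun z => by
    simpa only [mul_comm] using
      tsum_eLpNorm_const_mul_ne_top (fun k => hMh' k z) hh (by simpa only [mul_comm] using hs2)
  refine ⟨fun x z => integrable_tsum_mul_tsum (fun j => (hf' j).const_mul _)
    (fun k => (hh k).mul_const _) (hu x) (hv z), fun x z => ?_, ?_⟩
  · rw [integral_tsum_mul_tsum (fun j => (hf' j).const_mul _) (fun k => (hh k).mul_const _)
      (hu x) (hv z)]
    refine tsum_congr fun p => ?_
    rw [← integral_mul_const]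
    congr 1 with y
    ring
  · refine Summable.of_norm_bounded (hs1.abs.mul_of_nonneg hs2.abs (fun _ => abs_nonneg _)
      fun _ => abs_nonneg _) fun p => ?_
    have hCS := (norm_integral_le_integral_norm _).trans
      (integral_norm_mul_le_eLpNorm_two_mul_eLpNorm_two (hf' p.1) (hh p.2))
    simp only [Real.norm_eq_abs, abs_mul, abs_norm, abs_of_nonneg ENNReal.toReal_nonneg]
    calc ‖∫ y, f' p.1 y * h p.2 y ∂μ₂‖ * |Mf p.1| * |Mh' p.2|
        ≤ (eLpNorm (f' p.1) 2 μ₂).toReal * (eLpNorm (h p.2) 2 μ₂).toReal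
            * |Mf p.1| * |Mh' p.2| := by gcongr
      _ = _ := by ring

/-- Continuous matrix multiplication of kernels: if `K₁(x,y) = Σ_j f_j(x)f'_j(y)` and
`K₂(y,z) = Σ_k h_k(y)h'_k(z)` with `f_j, h'_k` bounded measurable and `f'_j, h_k ∈ L²(μ₂)`
with summable products of norms, then `y ↦ K₁(x,y)K₂(y,z)` is integrable for all `x, z`,
the integral equals the double series `Σ_{j,k} (∫ f'_j h_k) f_j(x) h'_k(z)`, and this
double series is absolutely summable against the sup-norm bounds. -/
theorem kernel_composition_integral
    {Ω₁ Ω₂ Ω₃ : Type _} [MeasurableSpace Ω₁] [MeasurableSpace Ω₂] [MeasurableSpace Ω₃]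
    (μ₂ : Measure Ω₂)
    (f : ℕ → Ω₁ → ℂ) (f' : ℕ → Ω₂ → ℂ) (h : ℕ → Ω₂ → ℂ) (h' : ℕ → Ω₃ → ℂ)
    (Mf Mh' : ℕ → ℝ)
    (hfm : ∀ j, Measurable (f j)) (hh'm : ∀ k, Measurable (h' k))
    (hMf : ∀ j x, ‖f j x‖ ≤ Mf j) (hMh' : ∀ k z, ‖h' k z‖ ≤ Mh' k)
    (hf' : ∀ j, MemLp (f' j) 2 μ₂) (hh : ∀ k, MemLp (h k) 2 μ₂)
    (hs1 : Summable fun j => Mf j * (eLpNorm (f' j) 2 μ₂).toReal)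
    (hs2 : Summable fun k => (eLpNorm (h k) 2 μ₂).toReal * Mh' k) :
    (∀ (x : Ω₁) (z : Ω₃),
      Integrable (fun y => (∑' j, f j x * f' j y) * (∑' k, h k y * h' k z)) μ₂) ∧
    (∀ (x : Ω₁) (z : Ω₃),
      ∫ y, (∑' j, f j x * f' j y) * (∑' k, h k y * h' k z) ∂μ₂
        = ∑' p : ℕ × ℕ, (∫ y, f' p.1 y * h p.2 y ∂μ₂) * (f p.1 x * h' p.2 z)) ∧
    Summable (fun p : ℕ × ℕ =>
      ‖∫ y, f' p.1 y * h p.2 y ∂μ₂‖ * Mf p.1 * Mh' p.2) :=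
  kernel_composition_integral_general μ₂ f f' h h' Mf Mh' hMf hMh' hf' hh hs1 hs2
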